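/- arXiv:2501.08789 — 3 statements merged into one kernel-verified Lean document; each statement's English description precedes it below -/
import Mathlib

section
/- The Laplace transform of the function t ↦ t^{β-1} E_{α,β}^γ(ω t^α) equals z^{αγ-β}/(z^α - ω)^γ for z > 0 with |ω z^{-α}| < 1, where E_{α,β}^γ is the three-parameter Mittag-Leffler function, in the case where γ is a positive integer and the series converges absolutely. -/
open Real Nat MeasureTheory

/-- The three-parameter Mittag-Leffler function
`E_{α,β}^γ(t) = ∑_{r=0}^∞ Γ(γ+r) t^r / (r! Γ(γ) Γ(αr+β))`. -/
noncomputable def mittagLeffler3 (α β γ : ℝ) (t : ℝ) : ℝ :=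
  ∑' r : ℕ, Real.Gamma (γ + r) * t ^ r / (r ! * Real.Gamma γ * Real.Gamma (α * r + β))

/-!
For `γ = k + 1` the coefficient `Γ(γ + r) / (r! Γ(γ))` is the binomial coefficient `C(r + k, k)`,
so `t^{β-1} E_{α,β}^γ(ω t^α) = ∑ C(r + k, k) ω^r t^{αr+β-1} / Γ(αr + β)`. Each term has Laplace
transform `C(r + k, k) ω^r / z^{αr+β}`; these are summable in absolute value because
`|ω z^{-α}| < 1`, so the series may be integrated term by term, and the negative binomial series
`∑ C(r + k, k) x^r = (1 - x)^{-(k+1)}` with `x = ω z^{-α}` gives the closed form.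
-/

open Set

lemma integrableOn_rpow_sub_one_mul_exp_neg_mul {s z : ℝ} (hs : 0 < s) (hz : 0 < z) :
    IntegrableOn (fun t : ℝ => t ^ (s - 1) * exp (-(z * t))) (Ioi 0) := by
  simpa using integrableOn_rpow_mul_exp_neg_mul_rpow (by linarith : -1 < s - 1) one_pos hz

lemma integral_rpow_sub_one_mul_exp_neg_mul {s z : ℝ} (hs : 0 < s) (hz : 0 < z) :
    ∫ t in Ioi 0, t ^ (s - 1) * exp (-(z * t)) = Gamma s / z ^ s := by
  rw [integral_rpow_mul_exp_neg_mul_Ioi hs hz, one_div, inv_rpow hz.le, inv_mul_eq_div]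

theorem integral_tsum_mul_rpow_mul_exp_neg_mul {α β z : ℝ} (hα : 0 ≤ α) (hβ : 0 < β)
    (hz : 0 < z) {a : ℕ → ℝ}
    (ha : Summable fun r : ℕ => a r * Gamma (α * r + β) / z ^ (α * r + β)) :
    ∫ t in Ioi 0, ∑' r : ℕ, a r * (t ^ (α * r + β - 1) * exp (-(z * t))) =
      ∑' r : ℕ, a r * Gamma (α * r + β) / z ^ (α * r + β) := by
  have hpos (r : ℕ) : 0 < α * r + β := by positivity
  have hint (r : ℕ) := integrableOn_rpow_sub_one_mul_exp_neg_mul (hpos r) hz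
  have hnorm (r : ℕ) : ∫ t in Ioi 0, ‖a r * (t ^ (α * r + β - 1) * exp (-(z * t)))‖ =
      |a r * Gamma (α * r + β) / z ^ (α * r + β)| := by
    have hG := Gamma_pos_of_pos (hpos r)
    have hzr := rpow_pos_of_pos hz (α * r + β)
    rw [abs_div, abs_mul, abs_of_pos hG, abs_of_pos hzr, mul_div_assoc,
      ← integral_rpow_sub_one_mul_exp_neg_mul (hpos r) hz, ← integral_const_mul]
    refine setIntegral_congr_fun measurableSet_Ioi fun t (ht : 0 < t) => ?_
    rw [norm_mul, Real.norm_eq_abs, norm_of_nonneg (by positivity)]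
  rw [← integral_tsum_of_summable_integral_norm (fun r => (hint r).const_mul (a r))
    (by simpa only [hnorm] using ha.abs)]
  simp_rw [integral_const_mul, integral_rpow_sub_one_mul_exp_neg_mul (hpos _) hz, mul_div_assoc]

lemma Real.Gamma_natCast_succ_add_natCast (k r : ℕ) :
    Gamma (((k + 1 : ℕ) : ℝ) + r) = (r + k).choose k * r ! * Gamma ((k + 1 : ℕ) : ℝ) := by
  rw [show (((k + 1 : ℕ) : ℝ) + r) = ((r + k : ℕ) : ℝ) + 1 by push_cast; ring,
    Nat.cast_succ, Gamma_nat_eq_factorial, Gamma_nat_eq_factorial,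
    ← Nat.add_choose_mul_factorial_mul_factorial]
  push_cast
  ring

lemma mittagLeffler3_natCast_succ (α β t : ℝ) (k : ℕ) :
    mittagLeffler3 α β (k + 1 : ℕ) t =
      ∑' r : ℕ, (r + k).choose k * t ^ r / Gamma (α * r + β) := by
  refine tsum_congr fun r => ?_
  have hΓ : Gamma ((k + 1 : ℕ) : ℝ) ≠ 0 := (Gamma_pos_of_pos (by positivity)).ne'
  have hr : (r ! : ℝ) ≠ 0 := by positivity
  rw [Real.Gamma_natCast_succ_add_natCast]
  field_simp

lemma exp_mul_rpow_mul_mittagLeffler3_natCast_succ (α β ω z : ℝ) (k : ℕ) {t : ℝ}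
    (ht : 0 < t) :
    exp (-z * t) * t ^ (β - 1) * mittagLeffler3 α β (k + 1 : ℕ) (ω * t ^ α) =
      ∑' r : ℕ, (r + k).choose k * ω ^ r / Gamma (α * r + β) *
        (t ^ (α * r + β - 1) * exp (-(z * t))) := by
  rw [mittagLeffler3_natCast_succ, ← tsum_mul_left]
  refine tsum_congr fun r => ?_
  rw [mul_pow, ← rpow_natCast (t ^ α), ← rpow_mul ht.le, add_sub_assoc, rpow_add ht, neg_mul]
  ring

lemma rpow_mul_sub_div_rpow_sub_pow {α β ω z : ℝ} (hz : 0 < z) (hωz : ω * z ^ (-α) ≠ 1)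
    (n : ℕ) :
    z ^ (α * n - β) / (z ^ α - ω) ^ n = 1 / (1 - ω * z ^ (-α)) ^ n / z ^ β := by
  have hzα := (rpow_pos_of_pos hz α).ne'
  have hzβ := (rpow_pos_of_pos hz β).ne'
  have h1 : 1 - ω * z ^ (-α) ≠ 0 := sub_ne_zero.2 hωz.symm
  have hsub : z ^ α - ω = (1 - ω * z ^ (-α)) * z ^ α := by
    rw [rpow_neg hz.le]
    field_simp
  rw [hsub, mul_pow, rpow_sub hz, rpow_mul hz.le, rpow_natCast]
  field_simp

theorem laplace_mittagLeffler_general (α β : ℝ) (hα : 0 < α) (hβ : 0 < β)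
    (γ : ℕ) (hγ : 1 ≤ γ) (ω : ℝ) (z : ℝ) (hz : 0 < z)
    (hω : |ω * z ^ (-α)| < 1) :
    ∫ t in Set.Ioi (0 : ℝ),
        Real.exp (-z * t) * t ^ (β - 1) * mittagLeffler3 α β γ (ω * t ^ α) =
      z ^ (α * γ - β) / (z ^ α - ω) ^ γ := by
  obtain ⟨k, rfl⟩ : ∃ k, γ = k + 1 := ⟨γ - 1, by omega⟩
  set x := ω * z ^ (-α) with hx
  have hx_norm : ‖x‖ < 1 := by rwa [Real.norm_eq_abs]
  have hcoef (r : ℕ) : (r + k).choose k * ω ^ r / Gamma (α * r + β) * Gamma (α * r + β) /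
      z ^ (α * r + β) = (r + k).choose k * x ^ r / z ^ β := by
    have hG := (Gamma_pos_of_pos (by positivity : 0 < α * r + β)).ne'
    have hzα := (rpow_pos_of_pos hz α).ne'
    have hzβ := (rpow_pos_of_pos hz β).ne'
    rw [rpow_add hz, rpow_mul hz.le, rpow_natCast, hx, rpow_neg hz.le, ← div_eq_mul_inv, div_pow]
    field_simp
  have hsum : Summable fun r : ℕ => (r + k).choose k * x ^ r / z ^ β :=
    (summable_choose_mul_geometric_of_norm_lt_one (R := ℝ) k hx_norm).div_const _
  rw [setIntegral_congr_fun measurableSet_Ioi fun t (ht : 0 < t) =>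
      exp_mul_rpow_mul_mittagLeffler3_natCast_succ α β ω z k ht,
    integral_tsum_mul_rpow_mul_exp_neg_mul hα.le hβ hz (hsum.congr fun r => (hcoef r).symm),
    tsum_congr hcoef, tsum_div_const, tsum_choose_mul_geometric_of_norm_lt_one k hx_norm,
    rpow_mul_sub_div_rpow_sub_pow hz (abs_lt.1 hω).2.ne]

theorem laplace_mittagLeffler (α β : ℝ) (hα : 0 < α) (hβ : 0 < β)
    (γ : ℕ) (hγ : 1 ≤ γ) (ω : ℝ) (z : ℝ) (hz : 0 < z)
    (hω : |ω * z ^ (-α)| < 1)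
    (hsum : ∀ t > (0 : ℝ), Summable fun r : ℕ =>
      |Real.Gamma ((γ : ℝ) + r) * (ω * t ^ α) ^ r /
        (r ! * Real.Gamma (γ : ℝ) * Real.Gamma (α * r + β))|)
    (hint : IntegrableOn
      (fun t : ℝ => Real.exp (-z * t) * t ^ (β - 1) * mittagLeffler3 α β γ (ω * t ^ α))
      (Set.Ioi 0)) :
    ∫ t in Set.Ioi (0 : ℝ),
        Real.exp (-z * t) * t ^ (β - 1) * mittagLeffler3 α β γ (ω * t ^ α) =
      z ^ (α * γ - β) / (z ^ α - ω) ^ γ :=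
  laplace_mittagLeffler_general α β hα hβ γ hγ ω z hz hω
end

section
/- Let p_n : [0,∞) → [0,1], n ≥ 0, be differentiable functions satisfying p_0' (t) = -λ p_0(t) + kμ p_1(t) and p_n'(t) = -(λ+kμ)p_n(t) + kμ p_{n+1}(t) + λ∑_{m=1}^n c'_m p_{n-m}(t) for n ≥ 1, with ∑_n p_n(t) = 1 and such that M(t) = ∑_n n p_n(t) and M_2(t) = ∑_n n² p_n(t) are finite and termwise differentiable. Then M'(t) = k(λ∑_{i=1}^l i c_i - μ) + kμ p_0(t). -/
/-!
Multiply the `n`-th equation by `n` and sum. With `M = ∑ n pₙ` and `∑ pₙ = 1`, the diagonal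
term gives `-(λ + kμ) M`, the service term `kμ ∑ n pₙ₊₁ = kμ (M - 1 + p₀)`, and the arrival
convolution `∑ₙ n ∑ₘ c'ₘ pₙ₋ₘ = ∑ₘ c'ₘ ∑ⱼ (j + m) pⱼ = M ∑ₘ c'ₘ + ∑ₘ m c'ₘ = M + k ∑ᵢ i cᵢ`.
Everything except `kμ (p₀ - 1) + λ k ∑ᵢ i cᵢ` cancels.
-/

open Finset

/-- The batch-size distribution `c'`: size `i k` has weight `c i` for `1 ≤ i ≤ l`. -/
def dilate (k l : ℕ) (c : ℕ → ℝ) (m : ℕ) : ℝ :=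
  if k ∣ m ∧ 1 ≤ m / k ∧ m / k ≤ l then c (m / k) else 0

section Dilate

variable {k l : ℕ} {c : ℕ → ℝ}

lemma dilate_mul (hk : 0 < k) (i : ℕ) :
    dilate k l c (i * k) = if 1 ≤ i ∧ i ≤ l then c i else 0 := by
  simp [dilate, Nat.mul_div_cancel i hk]

lemma dilate_eq_zero_of_notMem {m : ℕ} (hm : m ∉ (Icc 1 l).image (· * k)) :
    dilate k l c m = 0 := by
  refine if_neg fun ⟨hdvd, h1, h2⟩ => hm ?_
  exact mem_image.mpr ⟨m / k, mem_Icc.mpr ⟨h1, h2⟩, Nat.div_mul_cancel hdvd⟩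

lemma sum_image_dilate (hk : 0 < k) (f : ℕ → ℝ → ℝ) :
    ∑ m ∈ (Icc 1 l).image (· * k), f m (dilate k l c m) =
      ∑ i ∈ Icc 1 l, f (i * k) (c i) := by
  rw [sum_image fun a _ b _ h => Nat.eq_of_mul_eq_mul_right hk h]
  refine sum_congr rfl fun i hi => ?_
  rw [dilate_mul hk, if_pos (mem_Icc.mp hi)]

lemma one_le_of_mem_image_mul {m : ℕ} (hk : 0 < k) (hm : m ∈ (Icc 1 l).image (· * k)) :
    1 ≤ m := by
  obtain ⟨i, hi, rfl⟩ := mem_image.mp hm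
  exact Nat.one_le_iff_ne_zero.mpr (Nat.mul_ne_zero (by grind) hk.ne')

end Dilate

section Moments

variable {q : ℕ → ℝ} {P M : ℝ}

lemma hasSum_mul_succ (hP : HasSum q P) (hM : HasSum (fun n : ℕ => (n : ℝ) * q n) M) :
    HasSum (fun n : ℕ => (n : ℝ) * q (n + 1)) (M - (P - q 0)) := by
  have hM' := (hasSum_nat_add_iff' 1).mpr hM
  have hP' := (hasSum_nat_add_iff' 1).mpr hP
  simp only [range_one, sum_singleton, CharP.cast_eq_zero, zero_mul, sub_zero,
    Nat.cast_add, Nat.cast_one] at hM' hP'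
  exact (hM'.sub hP').congr_fun fun n => by ring

lemma hasSum_mul_shift (hP : HasSum q P) (hM : HasSum (fun n : ℕ => (n : ℝ) * q n) M)
    (m : ℕ) :
    HasSum (fun n : ℕ => if m ≤ n then (n : ℝ) * q (n - m) else 0) (M + m * P) := by
  have hshift := (hM.add (hP.mul_left (m : ℝ))).congr_fun
    (g := fun n : ℕ => if m ≤ n + m then ((n + m : ℕ) : ℝ) * q (n + m - m) else 0)
    fun n => by
      simp only [le_add_iff_nonneg_left, zero_le, if_true, Nat.add_sub_cancel]
      push_cast
      ring
  have hhead : ∑ n ∈ range m, (if m ≤ n then (n : ℝ) * q (n - m) else 0) = 0 :=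
    sum_eq_zero fun n hn => if_neg (by simpa using hn)
  have := (hasSum_nat_add_iff
    (f := fun n : ℕ => if m ≤ n then (n : ℝ) * q (n - m) else 0) m).mp hshift
  rwa [hhead, add_zero] at this

lemma sum_Icc_mul_sub_eq_sum_ite {a : ℕ → ℝ} {s : Finset ℕ} (hs : ∀ m ∈ s, 1 ≤ m)
    (ha : ∀ m ∉ s, a m = 0) (n : ℕ) :
    ∑ m ∈ Icc 1 n, a m * q (n - m) = ∑ m ∈ s, if m ≤ n then a m * q (n - m) else 0 := by
  rw [← sum_filter]
  refine (sum_subset (fun m hm => ?_) fun m hm hm' => ?_).symm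
  · obtain ⟨hms, hmn⟩ := mem_filter.mp hm
    exact mem_Icc.mpr ⟨hs m hms, hmn⟩
  · have hms : m ∉ s := fun hms => hm' (mem_filter.mpr ⟨hms, (mem_Icc.mp hm).2⟩)
    rw [ha m hms, zero_mul]

lemma hasSum_mul_sum_Icc_mul_sub {a : ℕ → ℝ} {s : Finset ℕ} (hs : ∀ m ∈ s, 1 ≤ m)
    (ha : ∀ m ∉ s, a m = 0) (hP : HasSum q P) (hM : HasSum (fun n : ℕ => (n : ℝ) * q n) M) :
    HasSum (fun n : ℕ => (n : ℝ) * ∑ m ∈ Icc 1 n, a m * q (n - m))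
      (∑ m ∈ s, a m * (M + m * P)) := by
  refine (hasSum_sum fun m _ => (hasSum_mul_shift hP hM m).mul_left (a m)).congr_fun fun n => ?_
  rw [sum_Icc_mul_sub_eq_sum_ite hs ha, mul_sum]
  refine sum_congr rfl fun m _ => ?_
  split_ifs <;> ring

lemma hasSum_mul_sum_Icc_dilate_mul_sub {k l : ℕ} {c : ℕ → ℝ} (hk : 0 < k) (hP : HasSum q P)
    (hM : HasSum (fun n : ℕ => (n : ℝ) * q n) M) :
    HasSum (fun n : ℕ => (n : ℝ) * ∑ m ∈ Icc 1 n, dilate k l c m * q (n - m))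
      ((∑ i ∈ Icc 1 l, c i) * M + k * P * ∑ i ∈ Icc 1 l, (i : ℝ) * c i) := by
  have h := hasSum_mul_sum_Icc_mul_sub (fun _ => one_le_of_mem_image_mul hk)
    (fun _ => dilate_eq_zero_of_notMem (l := l) (c := c)) hP hM
  rw [sum_image_dilate hk fun m x => x * (M + m * P)] at h
  convert h using 1
  simp only [mul_add, sum_add_distrib, ← sum_mul, mul_sum]
  exact congrArg _ (sum_congr rfl fun i _ => by push_cast; ring)

end Moments

theorem mean_queue_length_ode_general
    (l k : ℕ) (hl : 1 ≤ l) (hk : 1 ≤ k)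
    (lamV : ℕ → ℝ) (hlamV : ∀ i ∈ Finset.Icc 1 l, 0 < lamV i)
    (lam mu : ℝ)
    (c : ℕ → ℝ) (hc : ∀ i, c i = lamV i / ∑ j ∈ Finset.Icc 1 l, lamV j)
    (c' : ℕ → ℝ)
    (hc' : ∀ m : ℕ, c' m = if k ∣ m ∧ 1 ≤ m / k ∧ m / k ≤ l then c (m / k) else 0)
    (p : ℕ → ℝ → ℝ)
    (hode : ∀ n ≥ 1, ∀ t ≥ (0 : ℝ),
      deriv (p n) t = -(lam + k * mu) * p n t + k * mu * p (n + 1) t +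
        lam * ∑ m ∈ Finset.Icc 1 n, c' m * p (n - m) t)
    (hprob : ∀ t ≥ (0 : ℝ), HasSum (fun n => p n t) 1)
    (M : ℝ → ℝ)
    (hM : ∀ t ≥ (0 : ℝ), HasSum (fun n : ℕ => (n : ℝ) * p n t) (M t))
    (hterm : ∀ t ≥ (0 : ℝ),
      HasDerivAt M (∑' n : ℕ, (n : ℝ) * deriv (p n) t) t) :
    ∀ t ≥ (0 : ℝ),
      deriv M t = k * (lam * ∑ i ∈ Finset.Icc 1 l, (i : ℝ) * c i - mu) +
        k * mu * p 0 t := by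
  intro t ht
  have hc_sum : ∑ i ∈ Icc 1 l, c i = 1 := by
    simp only [hc, ← sum_div]
    exact div_self (sum_pos hlamV ⟨1, by simp [hl]⟩).ne'
  have hsum := (((hM t ht).mul_left (-(lam + k * mu))).add
    ((hasSum_mul_succ (hprob t ht) (hM t ht)).mul_left (k * mu))).add
    ((hasSum_mul_sum_Icc_dilate_mul_sub (l := l) (c := c) hk (hprob t ht) (hM t ht)).mul_left lam)
  rw [(hterm t ht).deriv, (hsum.congr_fun fun n => ?_).tsum_eq, hc_sum]
  · ring
  rcases Nat.eq_zero_or_pos n with rfl | hn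
  · simp
  · rw [hode n hn t ht, funext hc']
    simp only [dilate]
    ring

theorem mean_queue_length_ode
    (l k : ℕ) (hl : 1 ≤ l) (hk : 1 ≤ k)
    (lamV : ℕ → ℝ) (hlamV : ∀ i ∈ Finset.Icc 1 l, 0 < lamV i)
    (lam mu : ℝ) (hlam : lam = ∑ j ∈ Finset.Icc 1 l, lamV j) (hmu : 0 < mu)
    (c : ℕ → ℝ) (hc : ∀ i, c i = lamV i / ∑ j ∈ Finset.Icc 1 l, lamV j)
    (c' : ℕ → ℝ)
    (hc' : ∀ m : ℕ, c' m = if k ∣ m ∧ 1 ≤ m / k ∧ m / k ≤ l then c (m / k) else 0)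
    (p : ℕ → ℝ → ℝ)
    (hrange : ∀ n, ∀ t ≥ (0 : ℝ), p n t ∈ Set.Icc (0 : ℝ) 1)
    (hdiff : ∀ n, Differentiable ℝ (p n))
    (hode0 : ∀ t ≥ (0 : ℝ), deriv (p 0) t = -lam * p 0 t + k * mu * p 1 t)
    (hode : ∀ n ≥ 1, ∀ t ≥ (0 : ℝ),
      deriv (p n) t = -(lam + k * mu) * p n t + k * mu * p (n + 1) t +
        lam * ∑ m ∈ Finset.Icc 1 n, c' m * p (n - m) t)
    (hprob : ∀ t ≥ (0 : ℝ), HasSum (fun n => p n t) 1)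
    (M M2 : ℝ → ℝ)
    (hM : ∀ t ≥ (0 : ℝ), HasSum (fun n : ℕ => (n : ℝ) * p n t) (M t))
    (hM2 : ∀ t ≥ (0 : ℝ), HasSum (fun n : ℕ => (n : ℝ) ^ 2 * p n t) (M2 t))
    (hterm : ∀ t ≥ (0 : ℝ),
      HasDerivAt M (∑' n : ℕ, (n : ℝ) * deriv (p n) t) t) :
    ∀ t ≥ (0 : ℝ),
      deriv M t = k * (lam * ∑ i ∈ Finset.Icc 1 l, (i : ℝ) * c i - mu) +
        k * mu * p 0 t :=
  mean_queue_length_ode_general l k hl hk lamV hlamV lam mu c hc c' hc' p hode hprob M hM hterm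
end

section
/- Let θ be the unique root in the closed unit disk of the equation θ = δ + ωφ(θ), where δ = kμ/(λ+kμ+z), ω = λ/(λ+kμ+z) and φ(x) = x∑_{m=1}^l c_m x^{mk}. Then for any positive integer σ, the Lagrange inversion expansion gives θ^σ = δ^σ + σ∑_{n=1}^∞ (λ/kμ)^n ∑_{m_1+...+m_l = n, m_j ≥ 0} (∏_{i=1}^l c_i^{m_i}/m_i!) · (σ+n-1+k∑_j j m_j)!/(σ+k∑_j j m_j)! · δ^{σ+n+k∑_j j m_j}, provided the series converges absolutely. -/
/-!
Write `a = λ/(kμ)`, so that `ω = aδ` and the equation reads `θ = δ + aδ ∑ᵢ cᵢ θ^(dᵢ+1)` with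
`dᵢ = ik`. Lagrange's closed-form coefficients `b σ n` of `aⁿ` in `θ^σ` satisfy
`b (σ+1) (n+1) = δ b σ (n+1) + δ ∑ᵢ cᵢ b (σ+dᵢ+1) n`, the recursion that
`θ^(σ+1) = δ θ^σ + aδ ∑ᵢ cᵢ θ^(σ+dᵢ+1)` imposes, and `b (σ+τ)` is the convolution of `b σ`
and `b τ`. All coefficients are nonnegative, so induction bounds the partial sums of
`∑ₙ b σ n aⁿ` by `θ^σ`. Hence these series converge; by the Cauchy product their sums are the
powers of the sum `T` of the series for `σ = 1`, so `T ∈ [0, θ]` solves the equation and is `θ`.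
-/

open Finset Nat

theorem sum_Icc_one_eq_sum_fin {M : Type*} [AddCommMonoid M] (l : ℕ) (f : ℕ → M) :
    ∑ m ∈ Icc 1 l, f m = ∑ i : Fin l, f (i + 1) := by
  rw [← Ico_add_one_right_eq_Icc, sum_Ico_eq_sum_range, Nat.add_sub_cancel,
    ← Fin.sum_univ_eq_sum_range]
  simp only [add_comm 1]

section Tuples

variable {l : ℕ}

noncomputable def tupleWeight (c : Fin l → ℝ) (m : Fin l → ℕ) : ℝ := ∏ i, c i ^ m i / (m i)!

def tupleDegree (d m : Fin l → ℕ) : ℕ := ∑ i, d i * m i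

theorem tupleDegree_add_single (d v : Fin l → ℕ) (j : Fin l) :
    tupleDegree d (v + Pi.single j 1) = tupleDegree d v + d j := by
  simp [tupleDegree, mul_add, sum_add_distrib, Pi.single_apply]

theorem tupleWeight_add_single (c : Fin l → ℝ) (v : Fin l → ℕ) (j : Fin l) :
    (v j + 1 : ℝ) * tupleWeight c (v + Pi.single j 1) = c j * tupleWeight c v := by
  rw [tupleWeight, tupleWeight, ← mul_prod_erase _ _ (mem_univ j),
    ← mul_prod_erase _ _ (mem_univ j),
    prod_congr rfl fun i hi => by rw [Pi.add_apply, Pi.single_eq_of_ne (ne_of_mem_erase hi), add_zero]]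
  simp only [Pi.add_apply, Pi.single_eq_same, pow_succ, Nat.factorial_succ, Nat.cast_mul]
  field_simp
  push_cast
  ring

theorem sum_antidiagonalTuple_succ {M : Type*} [AddCommMonoid M] (n : ℕ) (j : Fin l)
    (G : (Fin l → ℕ) → M) (hG : ∀ u, u j = 0 → G u = 0) :
    ∑ u ∈ Nat.antidiagonalTuple l (n + 1), G u =
      ∑ v ∈ Nat.antidiagonalTuple l n, G (v + Pi.single j 1) := by
  symm
  refine sum_bij_ne_zero (fun v _ _ => v + Pi.single j 1) (fun v hv _ => ?_)
    (fun v _ _ w _ _ h => add_right_cancel h) (fun u hu hGu => ?_) (fun _ _ _ => rfl)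
  · simp_all [Nat.mem_antidiagonalTuple, sum_add_distrib]
  · have hu0 : u j ≠ 0 := fun h => hGu (hG u h)
    have hsplit : u - Pi.single j 1 + Pi.single j 1 = u := by
      ext i
      by_cases hi : i = j
      · subst hi
        simp only [Pi.add_apply, Pi.sub_apply, Pi.single_eq_same]
        omega
      · simp [Pi.single_eq_of_ne hi]
    refine ⟨u - Pi.single j 1, ?_, by rwa [hsplit], hsplit⟩
    rw [Nat.mem_antidiagonalTuple] at hu ⊢
    rw [← hsplit] at hu
    simp only [Pi.add_apply, sum_add_distrib] at hu
    simpa using hu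

theorem sum_mul_add_eq_of_mem_antidiagonalTuple {n : ℕ} (d u : Fin l → ℕ)
    (hu : u ∈ Nat.antidiagonalTuple l n) (s : ℝ) :
    ∑ j, (u j * (s + d j) : ℝ) = s * n + tupleDegree d u := by
  rw [Nat.mem_antidiagonalTuple] at hu
  simp only [tupleDegree, mul_add, sum_add_distrib, ← hu]
  push_cast
  rw [mul_sum]
  congr 1 <;> exact sum_congr rfl fun j _ => by ring

end Tuples

section Coefficients

variable {l : ℕ} (d : Fin l → ℕ) (c : Fin l → ℝ) (x : ℝ)

/-- `lagrangeCoeff d c x σ n` is the coefficient of `aⁿ` in `θ^σ` for the root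
`θ = x + a x ∑ᵢ cᵢ θ^(dᵢ+1)`, as given by Lagrange's formula with the derivatives expanded by the
multinomial theorem. -/
noncomputable def lagrangeCoeff : ℕ → ℕ → ℝ
  | σ, 0 => x ^ σ
  | σ, n + 1 => σ * ∑ m ∈ Nat.antidiagonalTuple l (n + 1),
      tupleWeight c m * ((σ + n + tupleDegree d m)! / (σ + tupleDegree d m)! : ℝ) *
        x ^ (σ + n + 1 + tupleDegree d m)

theorem lagrangeCoeff_zero_left (n : ℕ) :
    lagrangeCoeff d c x 0 n = if n = 0 then 1 else 0 := by
  cases n <;> simp [lagrangeCoeff]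

@[simp]
theorem lagrangeCoeff_zero_right (σ : ℕ) : lagrangeCoeff d c x σ 0 = x ^ σ := rfl

theorem lagrangeCoeff_succ_left (s n : ℕ) :
    lagrangeCoeff d c x (s + 1) n = (s + 1) * ∑ m ∈ Nat.antidiagonalTuple l n,
      tupleWeight c m * ((s + n + tupleDegree d m)! / (s + 1 + tupleDegree d m)! : ℝ) *
        x ^ (s + 1 + n + tupleDegree d m) := by
  cases n with
  | zero =>
    simp only [lagrangeCoeff, Nat.antidiagonalTuple_zero_right, sum_singleton, tupleWeight,
      tupleDegree, Pi.zero_apply, pow_zero, factorial_zero, cast_one, div_one, prod_const_one,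
      mul_zero, sum_const_zero, add_zero, factorial_succ, cast_mul, cast_add, one_mul]
    field_simp
  | succ n =>
    simp only [lagrangeCoeff]
    push_cast
    congr 1
    refine sum_congr rfl fun m _ => ?_
    rw [← add_assoc s n 1, Nat.add_right_comm s n 1, ← add_assoc (s + 1) n 1]

theorem lagrangeCoeff_nonneg (hc : ∀ i, 0 ≤ c i) (hx : 0 ≤ x) (σ n : ℕ) :
    0 ≤ lagrangeCoeff d c x σ n := by
  cases n with
  | zero => exact pow_nonneg hx σ
  | succ n =>
    refine mul_nonneg σ.cast_nonneg <| sum_nonneg fun m _ => by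
      have : 0 ≤ tupleWeight c m := prod_nonneg fun i _ => by have := hc i; positivity
      positivity

theorem mul_lagrangeCoeff_add_succ (σ n : ℕ) (j : Fin l) :
    x * (c j * lagrangeCoeff d c x (σ + d j + 1) n) =
      ∑ u ∈ Nat.antidiagonalTuple l (n + 1), (u j * (σ + 1 + d j) : ℝ) *
        (tupleWeight c u * ((σ + n + tupleDegree d u)! / (σ + 1 + tupleDegree d u)! : ℝ) *
          x ^ (σ + 1 + (n + 1) + tupleDegree d u)) := by
  rw [sum_antidiagonalTuple_succ n j _ fun u h => by simp [h], lagrangeCoeff_succ_left,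
    mul_sum, mul_sum, mul_sum]
  refine sum_congr rfl fun v _ => ?_
  rw [tupleDegree_add_single]
  have e₁ : σ + n + (tupleDegree d v + d j) = σ + d j + n + tupleDegree d v := by ring
  have e₂ : σ + 1 + (tupleDegree d v + d j) = σ + d j + 1 + tupleDegree d v := by ring
  have e₃ : σ + 1 + (n + 1) + (tupleDegree d v + d j) = σ + d j + 1 + n + tupleDegree d v + 1 := by
    ring
  rw [e₁, e₂, e₃, pow_succ]
  simp only [Pi.add_apply, Pi.single_eq_same]
  push_cast
  linear_combination (σ + 1 + d j : ℝ) *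
    ((σ + d j + n + tupleDegree d v)! / (σ + d j + 1 + tupleDegree d v)! : ℝ) *
      x ^ (σ + d j + 1 + n + tupleDegree d v) * x * (tupleWeight_add_single c v j).symm

theorem lagrangeCoeff_succ_succ (σ n : ℕ) :
    lagrangeCoeff d c x (σ + 1) (n + 1) = x * lagrangeCoeff d c x σ (n + 1) +
      x * ∑ j, c j * lagrangeCoeff d c x (σ + d j + 1) n := by
  set R : (Fin l → ℕ) → ℝ := fun u => tupleWeight c u *
    ((σ + n + tupleDegree d u)! / (σ + 1 + tupleDegree d u)! : ℝ) *
      x ^ (σ + 1 + (n + 1) + tupleDegree d u) with hR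
  have hfac (u : Fin l → ℕ) : ((σ + 1 + tupleDegree d u)! : ℝ) =
      (σ + 1 + tupleDegree d u) * (σ + tupleDegree d u)! := by
    rw [Nat.add_right_comm, Nat.factorial_succ]; push_cast; ring
  have hleft : lagrangeCoeff d c x (σ + 1) (n + 1) = ∑ u ∈ Nat.antidiagonalTuple l (n + 1),
      (σ + 1) * (σ + 1 + n + tupleDegree d u) * R u := by
    rw [lagrangeCoeff_succ_left, mul_sum]
    refine sum_congr rfl fun u _ => ?_
    rw [hR, show σ + (n + 1) + tupleDegree d u = σ + n + tupleDegree d u + 1 by ring,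
      Nat.factorial_succ]
    push_cast
    ring
  have hfirst : x * lagrangeCoeff d c x σ (n + 1) = ∑ u ∈ Nat.antidiagonalTuple l (n + 1),
      σ * (σ + 1 + tupleDegree d u) * R u := by
    rw [lagrangeCoeff, mul_sum, mul_sum]
    refine sum_congr rfl fun u _ => ?_
    simp only [hR]
    rw [hfac, show σ + 1 + (n + 1) + tupleDegree d u = σ + n + 1 + tupleDegree d u + 1 by ring,
      pow_succ]
    field_simp
  have hsecond : x * ∑ j, c j * lagrangeCoeff d c x (σ + d j + 1) n =
      ∑ u ∈ Nat.antidiagonalTuple l (n + 1), ((σ + 1) * (n + 1) + tupleDegree d u) * R u := by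
    rw [mul_sum, sum_congr rfl fun j _ => mul_lagrangeCoeff_add_succ d c x σ n j, sum_comm]
    refine sum_congr rfl fun u hu => ?_
    rw [← sum_mul, sum_mul_add_eq_of_mem_antidiagonalTuple d u hu]
    push_cast
    ring
  rw [hleft, hfirst, hsecond, ← sum_add_distrib]
  exact sum_congr rfl fun u _ => by ring

theorem lagrangeCoeff_add (n : ℕ) : ∀ σ τ, lagrangeCoeff d c x (σ + τ) n =
    ∑ p ∈ antidiagonal n, lagrangeCoeff d c x σ p.1 * lagrangeCoeff d c x τ p.2 := by
  induction n with
  | zero => simp [lagrangeCoeff, pow_add]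
  | succ n ihn =>
    intro σ τ
    induction τ with
    | zero => simp [sum_antidiagonal_succ', lagrangeCoeff_zero_left]
    | succ τ ihτ =>
      have hshift (j : Fin l) : σ + τ + d j + 1 = σ + (τ + d j + 1) := by ring
      rw [← add_assoc, lagrangeCoeff_succ_succ, ihτ, sum_antidiagonal_succ', sum_antidiagonal_succ']
      simp only [hshift, ihn, lagrangeCoeff_succ_succ, lagrangeCoeff_zero_right, mul_add, mul_sum,
        sum_add_distrib]
      rw [sum_comm]
      ring_nf
      exact congrArg _ (sum_congr rfl fun _ _ => sum_congr rfl fun _ _ => by ring)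

end Coefficients

section Series

variable {l : ℕ} (d : Fin l → ℕ) (c : Fin l → ℝ) (x a : ℝ)

noncomputable def lagrangeSeries (σ : ℕ) : ℝ := ∑' n, lagrangeCoeff d c x σ n * a ^ n

theorem sum_range_succ_lagrangeCoeff_mul_pow (σ N : ℕ) :
    ∑ n ∈ range (N + 1), lagrangeCoeff d c x (σ + 1) n * a ^ n =
      x * ∑ n ∈ range (N + 1), lagrangeCoeff d c x σ n * a ^ n +
        a * x * ∑ j, c j * ∑ n ∈ range N, lagrangeCoeff d c x (σ + d j + 1) n * a ^ n := by
  have hterm (n : ℕ) : lagrangeCoeff d c x (σ + 1) (n + 1) * a ^ (n + 1) =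
      x * (lagrangeCoeff d c x σ (n + 1) * a ^ (n + 1)) +
        a * x * ∑ j, c j * (lagrangeCoeff d c x (σ + d j + 1) n * a ^ n) := by
    rw [lagrangeCoeff_succ_succ, pow_succ, mul_sum, mul_sum, add_mul, sum_mul]
    exact congrArg₂ _ (by ring) (sum_congr rfl fun _ _ => by ring)
  simp only [sum_range_succ' _ N, hterm, sum_add_distrib, ← mul_sum, lagrangeCoeff_zero_right]
  rw [sum_comm]
  simp only [← mul_sum]
  ring

theorem pow_succ_eq_of_fixedPoint {θ : ℝ} (hfix : θ = x + a * x * ∑ i, c i * θ ^ (d i + 1))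
    (σ : ℕ) : θ ^ (σ + 1) = x * θ ^ σ + a * x * ∑ j, c j * θ ^ (σ + d j + 1) := by
  calc θ ^ (σ + 1) = θ ^ σ * (x + a * x * ∑ i, c i * θ ^ (d i + 1)) := by rw [pow_succ, ← hfix]
    _ = _ := by
      simp only [add_assoc σ, pow_add θ σ, mul_add, mul_sum]
      rw [mul_comm]
      exact congrArg _ (sum_congr rfl fun _ _ => by ring)

variable {d c x a}

theorem sum_range_lagrangeCoeff_mul_pow_le (hx : 0 ≤ x) (ha : 0 ≤ a) (hc : ∀ i, 0 ≤ c i)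
    {θ : ℝ} (hθ : 0 ≤ θ) (hfix : θ = x + a * x * ∑ i, c i * θ ^ (d i + 1)) (N : ℕ) :
    ∀ σ, ∑ n ∈ range N, lagrangeCoeff d c x σ n * a ^ n ≤ θ ^ σ := by
  induction N with
  | zero => simp [pow_nonneg hθ]
  | succ N ihN =>
    intro σ
    induction σ with
    | zero => simp [lagrangeCoeff_zero_left]
    | succ σ ihσ =>
      rw [sum_range_succ_lagrangeCoeff_mul_pow, pow_succ_eq_of_fixedPoint d c x a hfix]
      gcongr with j
      · exact hc j
      · exact ihN _

theorem lagrangeSeries_succ (hs : ∀ σ, Summable fun n => lagrangeCoeff d c x σ n * a ^ n)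
    (σ : ℕ) : lagrangeSeries d c x a (σ + 1) = x * lagrangeSeries d c x a σ +
      a * x * ∑ j, c j * lagrangeSeries d c x a (σ + d j + 1) := by
  have hpartial (σ : ℕ) := (hs σ).hasSum.tendsto_sum_nat
  have hleft := (hpartial (σ + 1)).comp (Filter.tendsto_add_atTop_nat 1)
  simp only [Function.comp_def, sum_range_succ_lagrangeCoeff_mul_pow] at hleft
  refine tendsto_nhds_unique hleft ?_
  exact ((((hpartial σ).comp (Filter.tendsto_add_atTop_nat 1)).const_mul x).add
    ((tendsto_finsetSum _ fun j _ => (hpartial _).const_mul (c j)).const_mul (a * x)))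

theorem lagrangeSeries_zero : lagrangeSeries d c x a 0 = 1 := by
  simp [lagrangeSeries, lagrangeCoeff_zero_left]

theorem lagrangeSeries_add (hx : 0 ≤ x) (ha : 0 ≤ a) (hc : ∀ i, 0 ≤ c i)
    (hs : ∀ σ, Summable fun n => lagrangeCoeff d c x σ n * a ^ n) (σ τ : ℕ) :
    lagrangeSeries d c x a (σ + τ) = lagrangeSeries d c x a σ * lagrangeSeries d c x a τ := by
  have hnonneg (σ n : ℕ) : 0 ≤ lagrangeCoeff d c x σ n * a ^ n :=
    mul_nonneg (lagrangeCoeff_nonneg d c x hc hx σ n) (pow_nonneg ha n)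
  have hnorm (σ : ℕ) : Summable fun n => ‖lagrangeCoeff d c x σ n * a ^ n‖ :=
    (hs σ).congr fun n => (Real.norm_of_nonneg (hnonneg σ n)).symm
  rw [lagrangeSeries, lagrangeSeries, lagrangeSeries,
    tsum_mul_tsum_eq_tsum_sum_antidiagonal_of_summable_norm (hnorm σ) (hnorm τ)]
  refine tsum_congr fun n => ?_
  rw [lagrangeCoeff_add, sum_mul]
  refine sum_congr rfl fun p hp => ?_
  rw [← mem_antidiagonal.mp hp, pow_add]
  ring

theorem hasSum_lagrangeCoeff_mul_pow (hx : 0 ≤ x) (ha : 0 ≤ a) (hc : ∀ i, 0 ≤ c i)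
    {θ : ℝ} (hθ : 0 ≤ θ) (hfix : θ = x + a * x * ∑ i, c i * θ ^ (d i + 1))
    (hmin : ∀ t, 0 ≤ t → t ≤ θ → t = x + a * x * ∑ i, c i * t ^ (d i + 1) → t = θ) (σ : ℕ) :
    HasSum (fun n => lagrangeCoeff d c x σ n * a ^ n) (θ ^ σ) := by
  have hnonneg (σ n : ℕ) : 0 ≤ lagrangeCoeff d c x σ n * a ^ n :=
    mul_nonneg (lagrangeCoeff_nonneg d c x hc hx σ n) (pow_nonneg ha n)
  have hle N σ := sum_range_lagrangeCoeff_mul_pow_le hx ha hc hθ hfix N σ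
  have hs σ : Summable fun n => lagrangeCoeff d c x σ n * a ^ n :=
    summable_of_sum_range_le (hnonneg σ) (hle · σ)
  have hpow σ : lagrangeSeries d c x a σ = lagrangeSeries d c x a 1 ^ σ := by
    induction σ with
    | zero => rw [pow_zero, lagrangeSeries_zero]
    | succ σ ih => rw [lagrangeSeries_add hx ha hc hs, ih, pow_succ]
  have hT : lagrangeSeries d c x a 1 = θ := by
    refine hmin _ (tsum_nonneg (hnonneg 1)) ?_ ?_
    · simpa [lagrangeSeries] using Real.tsum_le_of_sum_range_le (hnonneg 1) (hle · 1)
    · simpa [lagrangeSeries_zero, ← hpow] using lagrangeSeries_succ hs 0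
  rw [← hT, ← hpow]
  exact (hs σ).hasSum

end Series

theorem abs_sum_mul_pow_le_one {ι : Type*} {s : Finset ι} {c : ι → ℝ} (hc : ∀ i ∈ s, 0 ≤ c i)
    (hcs : ∑ i ∈ s, c i ≤ 1) {t : ℝ} (ht : |t| ≤ 1) (e : ι → ℕ) :
    |∑ i ∈ s, c i * t ^ e i| ≤ 1 := by
  refine (abs_sum_le_sum_abs _ _).trans ((sum_le_sum fun i hi => ?_).trans hcs)
  rw [abs_mul, abs_of_nonneg (hc i hi), abs_pow]
  exact mul_le_of_le_one_right (hc i hi) (pow_le_one₀ (abs_nonneg t) ht)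

theorem lagrange_expansion_general
    (lam mu z : ℝ) (hlam : 0 < lam) (hmu : 0 < mu) (hz : 0 < z)
    (k l sigma : ℕ) (hk : 1 ≤ k)
    (c : ℕ → ℝ) (hc : ∀ m ∈ Finset.Icc 1 l, 0 ≤ c m)
    (hcsum : ∑ m ∈ Finset.Icc 1 l, c m = 1)
    (delta omega : ℝ)
    (hdelta : delta = k * mu / (lam + k * mu + z))
    (homega : omega = lam / (lam + k * mu + z))
    (phi : ℝ → ℝ) (hphi : ∀ x, phi x = x * ∑ m ∈ Finset.Icc 1 l, c m * x ^ (m * k))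
    (theta : ℝ) (htheta : |theta| ≤ 1 ∧ theta = delta + omega * phi theta)
    (huniq : ∀ t : ℝ, |t| ≤ 1 → t = delta + omega * phi t → t = theta) :
    theta ^ sigma = delta ^ sigma +
      sigma * ∑' n : ℕ,
        (lam / (k * mu)) ^ (n + 1) *
          ∑ m ∈ Finset.Nat.antidiagonalTuple l (n + 1),
            (∏ i : Fin l, c (i + 1) ^ m i / (m i)!) *
              ((sigma + n + k * ∑ j : Fin l, ((j : ℕ) + 1) * m j)! /
                ((sigma + k * ∑ j : Fin l, ((j : ℕ) + 1) * m j)! : ℝ)) *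
              delta ^ (sigma + n + 1 + k * ∑ j : Fin l, ((j : ℕ) + 1) * m j) := by
  obtain ⟨hθ_abs, hθ_fix⟩ := htheta
  have hkμ : 0 < (k : ℝ) * mu := mul_pos (by exact_mod_cast hk) hmu
  have hδ : 0 < delta := hdelta ▸ div_pos hkμ (by positivity)
  have hω : omega = lam / (k * mu) * delta := by rw [homega, hdelta]; field_simp
  have hω1 : omega < 1 := by rw [homega, div_lt_one (by positivity)]; linarith
  have hfix (t : ℝ) : delta + omega * phi t =
      delta + lam / (k * mu) * delta * ∑ i : Fin l, c (i + 1) * t ^ ((i + 1) * k + 1) := by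
    rw [hphi, sum_Icc_one_eq_sum_fin, hω, mul_sum]
    congr 2
    exact sum_congr rfl fun _ _ => by ring
  have hψ := abs_sum_mul_pow_le_one hc hcsum.le hθ_abs (· * k)
  have hθ : 0 < theta := by
    have hωψ := mul_le_of_le_one_right (by rw [homega]; positivity : 0 ≤ omega)
      ((le_abs_self _).trans hψ)
    rw [hphi] at hθ_fix
    nlinarith
  have hsum := hasSum_lagrangeCoeff_mul_pow (d := fun i => (i + 1) * k) (c := fun i => c (i + 1))
    hδ.le (by positivity) (fun i => hc _ (by simp)) hθ.le (hθ_fix.trans (hfix theta))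
    (fun t ht₀ htθ ht => huniq t (abs_le.mpr ⟨by linarith, htθ.trans ((le_abs_self _).trans hθ_abs)⟩)
      (ht.trans (hfix t).symm)) sigma
  have hdeg (m : Fin l → ℕ) : tupleDegree (fun i : Fin l => (i + 1) * k) m =
      k * ∑ j : Fin l, (j + 1) * m j := by
    rw [tupleDegree, mul_sum]
    exact sum_congr rfl fun _ _ => by ring
  rw [← hsum.tsum_eq, hsum.summable.tsum_eq_zero_add, ← tsum_mul_left]
  congr 1
  · simp
  · refine tsum_congr fun n => ?_
    simp only [lagrangeCoeff, tupleWeight, hdeg, mul_sum, sum_mul]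
    exact sum_congr rfl fun m _ => by ring

theorem lagrange_expansion
    (lam mu z : ℝ) (hlam : 0 < lam) (hmu : 0 < mu) (hz : 0 < z)
    (k l sigma : ℕ) (hk : 1 ≤ k) (hl : 1 ≤ l) (hsigma : 1 ≤ sigma)
    (c : ℕ → ℝ) (hc : ∀ m ∈ Finset.Icc 1 l, 0 ≤ c m)
    (hcsum : ∑ m ∈ Finset.Icc 1 l, c m = 1)
    (delta omega : ℝ)
    (hdelta : delta = k * mu / (lam + k * mu + z))
    (homega : omega = lam / (lam + k * mu + z))
    (phi : ℝ → ℝ) (hphi : ∀ x, phi x = x * ∑ m ∈ Finset.Icc 1 l, c m * x ^ (m * k))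
    (theta : ℝ) (htheta : |theta| ≤ 1 ∧ theta = delta + omega * phi theta)
    (huniq : ∀ t : ℝ, |t| ≤ 1 → t = delta + omega * phi t → t = theta)
    (hconv : Summable fun n : ℕ =>
      |(lam / (k * mu)) ^ (n + 1) *
        ∑ m ∈ Finset.Nat.antidiagonalTuple l (n + 1),
          (∏ i : Fin l, c (i + 1) ^ m i / (m i)!) *
            ((sigma + n + k * ∑ j : Fin l, ((j : ℕ) + 1) * m j)! /
              ((sigma + k * ∑ j : Fin l, ((j : ℕ) + 1) * m j)! : ℝ)) *
            delta ^ (sigma + n + 1 + k * ∑ j : Fin l, ((j : ℕ) + 1) * m j)|) :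
    theta ^ sigma = delta ^ sigma +
      sigma * ∑' n : ℕ,
        (lam / (k * mu)) ^ (n + 1) *
          ∑ m ∈ Finset.Nat.antidiagonalTuple l (n + 1),
            (∏ i : Fin l, c (i + 1) ^ m i / (m i)!) *
              ((sigma + n + k * ∑ j : Fin l, ((j : ℕ) + 1) * m j)! /
                ((sigma + k * ∑ j : Fin l, ((j : ℕ) + 1) * m j)! : ℝ)) *
              delta ^ (sigma + n + 1 + k * ∑ j : Fin l, ((j : ℕ) + 1) * m j) :=
  lagrange_expansion_general lam mu z hlam hmu hz k l sigma hk c hc hcsum delta omega hdelta homega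
    phi hphi theta htheta huniq
end
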